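/- arXiv:1404.0770 — 2 statements merged into one kernel-verified Lean document; each statement's English description precedes it below -/
import Mathlib

section
/- Let A_0, A_1, …, A_{n-1} be orthogonal d×d matrices and let v ∈ ℝ^d, z a d×d orthogonal matrix, and suppose the partial sums S_j = ∑_{i=0}^{j} z^i v are uniformly bounded by K. Then for 0 ≤ ℓ ≤ n, |∑_{j=0}^{ℓ} (A_0 A_1 ⋯ A_{j-1}) z^j v| ≤ 2K ∑_{k=1}^{ℓ-1} |A_k − I| + c(K, |v|), where c depends only on K and |v| (Abel resummation bound for twisted sums). -/
/-!
Abel summation turns the twisted sum `∑_{j ≤ ℓ} P_j z^j v`, with `P_j = A_0 ⋯ A_{j-1}`, into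
`P_ℓ S_ℓ - ∑_{k < ℓ} (P_{k+1} - P_k) S_k`, where `S_k = ∑_{i ≤ k} z^i v`. Since `P_k` is orthogonal,
`‖P_{k+1} - P_k‖ = ‖P_k (A_k - 1)‖ = ‖A_k - 1‖`, so the sum is at most `K + K ∑_{k < ℓ} ‖A_k - 1‖`,
and `‖A_0 - 1‖ ≤ 2` absorbs the term `k = 0` into the constant `c = 3K`.
-/

open Finset

theorem norm_sum_range_apply_le_of_norm_partialSum_le {𝕜 E : Type*} [NontriviallyNormedField 𝕜]
    [SeminormedAddCommGroup E] [NormedSpace 𝕜 E] (f : ℕ → E →L[𝕜] E) (g : ℕ → E) {K : ℝ}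
    (hg : ∀ m, ‖∑ j ∈ range (m + 1), g j‖ ≤ K) (n : ℕ) :
    ‖∑ i ∈ range (n + 1), f i (g i)‖ ≤ ‖f n‖ * K + ∑ i ∈ range n, ‖f (i + 1) - f i‖ * K := by
  have h := sum_range_by_parts f g (n + 1)
  simp only [ContinuousLinearMap.smul_def, Nat.add_sub_cancel] at h
  rw [h]
  calc _ ≤ ‖f n (∑ j ∈ range (n + 1), g j)‖
          + ∑ i ∈ range n, ‖(f (i + 1) - f i) (∑ j ∈ range (i + 1), g j)‖ :=
        (norm_sub_le _ _).trans (add_le_add_right (norm_sum_le _ _) _)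
    _ ≤ _ := add_le_add ((f n).le_opNorm_of_le (hg n))
        (sum_le_sum fun i _ => (f (i + 1) - f i).le_opNorm_of_le (hg i))

namespace Matrix

variable {𝕜 ι : Type*} [RCLike 𝕜] [Fintype ι] [DecidableEq ι]

theorem norm_toEuclideanCLM_le_one_of_mem_unitary {U : Matrix ι ι 𝕜}
    (hU : U ∈ unitary (Matrix ι ι 𝕜)) : ‖toEuclideanCLM (𝕜 := 𝕜) U‖ ≤ 1 :=
  calc ‖toEuclideanCLM (𝕜 := 𝕜) U‖ = ‖toEuclideanCLM (𝕜 := 𝕜) U * 1‖ := by rw [mul_one]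
    _ = ‖(1 : EuclideanSpace 𝕜 ι →L[𝕜] EuclideanSpace 𝕜 ι)‖ :=
        CStarRing.norm_mem_unitary_mul _ (Unitary.map_mem _ hU)
    _ ≤ 1 := ContinuousLinearMap.norm_id_le

end Matrix

theorem stmt_13 (K nv : ℝ) :
    ∃ c : ℝ, ∀ (d n : ℕ) (A : ℕ → Matrix.orthogonalGroup (Fin d) ℝ)
      (z : Matrix.orthogonalGroup (Fin d) ℝ) (v : EuclideanSpace ℝ (Fin d)),
      ‖v‖ = nv →
      (∀ j : ℕ, ‖∑ i ∈ Finset.range (j + 1),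
          (Matrix.toEuclideanCLM (𝕜 := ℝ) ((z : Matrix (Fin d) (Fin d) ℝ) ^ i)) v‖ ≤ K) →
      ∀ ℓ ≤ n,
        ‖∑ j ∈ Finset.range (ℓ + 1),
            (Matrix.toEuclideanCLM (𝕜 := ℝ) (n := Fin d)
              ((((List.range j).map fun k => (A k : Matrix (Fin d) (Fin d) ℝ)).prod
                * (z : Matrix (Fin d) (Fin d) ℝ) ^ j))) v‖
          ≤ 2 * K * ∑ k ∈ Finset.Ico 1 ℓ,
              ‖Matrix.toEuclideanCLM (𝕜 := ℝ) (n := Fin d)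
                ((A k : Matrix (Fin d) (Fin d) ℝ) - 1)‖ + c := by
  refine ⟨3 * K, fun d n A z v _ hS ℓ _ => ?_⟩
  set φ := Matrix.toEuclideanCLM (𝕜 := ℝ) (n := Fin d)
  set P : ℕ → Matrix (Fin d) (Fin d) ℝ :=
    fun k => ((List.range k).map fun i => (A i : Matrix (Fin d) (Fin d) ℝ)).prod
  have hP : ∀ k, P k ∈ unitary (Matrix (Fin d) (Fin d) ℝ) := fun k =>
    Submonoid.list_prod_mem _ (by simp)
  have hstep : ∀ k, ‖φ (P (k + 1)) - φ (P k)‖ = ‖φ (A k - 1)‖ := fun k => by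
    rw [← map_sub, show P (k + 1) - P k = P k * (A k - 1) by simp [P, List.prod_range_succ, mul_sub],
      map_mul, CStarRing.norm_mem_unitary_mul _ (Unitary.map_mem φ (hP k))]
  have hK : 0 ≤ K := (norm_nonneg _).trans (hS 0)
  have hA0 : ‖φ (A 0 - 1)‖ ≤ 2 := by
    rw [map_sub]
    refine (norm_sub_le _ _).trans ?_
    linarith [Matrix.norm_toEuclideanCLM_le_one_of_mem_unitary (A 0).2,
      Matrix.norm_toEuclideanCLM_le_one_of_mem_unitary (one_mem (unitary (Matrix (Fin d) (Fin d) ℝ)))]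
  have habel := norm_sum_range_apply_le_of_norm_partialSum_le (fun k => φ (P k))
    (fun j => φ ((z : Matrix (Fin d) (Fin d) ℝ) ^ j) v) hS ℓ
  simp only [hstep, ← mul_apply_eq_comp, ← map_mul] at habel
  have hPℓ : ‖φ (P ℓ)‖ ≤ 1 := Matrix.norm_toEuclideanCLM_le_one_of_mem_unitary (hP ℓ)
  refine habel.trans ?_
  rcases Nat.eq_zero_or_pos ℓ with rfl | hℓ
  · simp only [range_zero, sum_empty, Ico_eq_empty_of_le zero_le_one]
    nlinarith
  · rw [← sum_mul, sum_range_eq_add_Ico _ hℓ]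
    have : 0 ≤ ∑ k ∈ Ico 1 ℓ, ‖φ (A k - 1)‖ := sum_nonneg fun _ _ => norm_nonneg _
    nlinarith
end

section
/- Let (Y, μ) be a probability space with a countable measurable partition α, let F : Y → Y be Gibbs-Markov, and q_n the n-step inverse Jacobian satisfying q_n(y) ≤ D μ(a) for all a ∈ α_n (the partition into n-cylinders) and y ∈ a's image preimage. If H : Y → O(d) satisfies ∑_{a∈α} μ(a) (D_θ' H(a))^ε < ∞ where D_θ' H(a) is the local Lipschitz constant, then ∑_{a∈α_n} μ(a) ∑_{j=0}^{n-1} (D_θ' H(F^j a))^ε θ^{n-j} ≤ (1−θ)^{-1} ∑_{a∈α} μ(a)(D_θ' H(a))^ε, uniformly in n. -/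
/-!
Bound the length-`n - j` Lipschitz constant of the cylinder `a` by the one-step constant of
the letter `a j`, swap the two sums, and observe that the `n`-cylinders with `a j = i` are
disjoint pieces of `F^[j] ⁻¹' Z i`, which has measure `μ (Z i)` by invariance. Each `j` thus
contributes at most `θ ^ (n - j)` times the one-step sum, and the geometric series gives
the factor `(1 - θ)⁻¹`.
-/

open MeasureTheory Finset Function

lemma sum_fin_pow_sub_le_inv_one_sub {θ : ℝ} (hθ0 : 0 ≤ θ) (hθ1 : θ < 1) (n : ℕ) :
    ∑ j : Fin n, θ ^ (n - (j : ℕ)) ≤ (1 - θ)⁻¹ :=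
  calc ∑ j : Fin n, θ ^ (n - (j : ℕ))
      ≤ ∑ j ∈ range n, θ ^ (n - 1 - j) := by
        rw [Fin.sum_univ_eq_sum_range (fun j => θ ^ (n - j))]
        exact sum_le_sum fun j _ => pow_le_pow_of_le_one hθ0 hθ1.le (by omega)
    _ = ∑ j ∈ range n, θ ^ j := sum_range_reflect (θ ^ ·) n
    _ ≤ (1 - θ)⁻¹ := by simpa using geom_sum_Ico_le_of_lt_one (m := 0) (n := n) hθ0 hθ1

section Itinerary

variable {Y ι : Type*} {F : Y → Y} {Z : ι → Set Y} {n : ℕ}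

def itineraryCylinder (F : Y → Y) (Z : ι → Set Y) (a : Fin n → ι) : Set Y :=
  ⋂ i : Fin n, F^[(i : ℕ)] ⁻¹' Z (a i)

lemma itineraryCylinder_subset_preimage (a : Fin n → ι) (j : Fin n) :
    itineraryCylinder F Z a ⊆ F^[(j : ℕ)] ⁻¹' Z (a j) :=
  Set.iInter_subset _ j

lemma pairwise_disjoint_itineraryCylinder (hZ : Pairwise (Disjoint on Z)) :
    Pairwise (Disjoint on (itineraryCylinder F Z : (Fin n → ι) → Set Y)) := by
  intro a b hab
  obtain ⟨j, hj⟩ := Function.ne_iff.1 hab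
  exact ((hZ hj).preimage _).mono (itineraryCylinder_subset_preimage a j)
    (itineraryCylinder_subset_preimage b j)

variable [MeasurableSpace Y] {μ : Measure Y}

lemma measurableSet_itineraryCylinder (hF : Measurable F) (hZ : ∀ i, MeasurableSet (Z i))
    (a : Fin n → ι) : MeasurableSet (itineraryCylinder F Z a) :=
  .iInter fun i => (hZ (a i)).preimage (hF.iterate i)

lemma sum_measure_itineraryCylinder_filter_le [DecidableEq ι] (hF : MeasurePreserving F μ μ)
    (hZ : ∀ i, MeasurableSet (Z i)) (hZd : Pairwise (Disjoint on Z))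
    (s : Finset (Fin n → ι)) (j : Fin n) (i : ι) :
    ∑ a ∈ s with a j = i, μ (itineraryCylinder F Z a) ≤ μ (Z i) := by
  rw [← measure_biUnion_finset
    (fun a _ b _ hab => pairwise_disjoint_itineraryCylinder hZd hab)
    (fun a _ => measurableSet_itineraryCylinder hF.measurable hZ a),
    ← (hF.iterate j).measure_preimage (hZ i).nullMeasurableSet]
  refine measure_mono (Set.iUnion₂_subset fun a ha => ?_)
  rw [← (mem_filter.1 ha).2]
  exact itineraryCylinder_subset_preimage a j

lemma sum_measure_itineraryCylinder_mul_le_tsum [IsFiniteMeasure μ]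
    (hF : MeasurePreserving F μ μ) (hZ : ∀ i, MeasurableSet (Z i))
    (hZd : Pairwise (Disjoint on Z))
    {w : ι → ℝ} (hw : ∀ i, 0 ≤ w i) (hsum : Summable fun i => (μ (Z i)).toReal * w i)
    (s : Finset (Fin n → ι)) (j : Fin n) :
    ∑ a ∈ s, (μ (itineraryCylinder F Z a)).toReal * w (a j) ≤
      ∑' i, (μ (Z i)).toReal * w i := by
  classical
  rw [← sum_fiberwise_of_maps_to (g := (· j)) fun a ha => mem_image_of_mem (· j) ha]
  calc _ = ∑ i ∈ s.image (· j),
        (∑ a ∈ s with a j = i, μ (itineraryCylinder F Z a)).toReal * w i := by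
        refine sum_congr rfl fun i _ => ?_
        rw [ENNReal.toReal_sum fun a _ => measure_ne_top μ _, sum_mul]
        exact sum_congr rfl fun a ha => by rw [(mem_filter.1 ha).2]
    _ ≤ ∑ i ∈ s.image (· j), (μ (Z i)).toReal * w i := by
        gcongr with i
        · exact hw i
        · exact measure_ne_top μ _
        · exact sum_measure_itineraryCylinder_filter_le hF hZ hZd s j i
    _ ≤ ∑' i, (μ (Z i)).toReal * w i :=
        hsum.sum_le_tsum _ fun i _ => mul_nonneg ENNReal.toReal_nonneg (hw i)

end Itinerary

theorem stmt_16 {Y : Type*} [MeasurableSpace Y] (μ : Measure Y) [IsProbabilityMeasure μ]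
    (F : Y → Y) (hF : MeasurePreserving F μ μ)
    {ι : Type*} (Z : ι → Set Y) (hZmeas : ∀ i, MeasurableSet (Z i))
    (hZdisj : Pairwise (Function.onFun Disjoint Z))
    (θ ε : ℝ) (hθ0 : 0 < θ) (hθ1 : θ < 1) (hε0 : 0 < ε)
    (D : (n : ℕ) → (Fin n → ι) → ℝ) (hD0 : ∀ n a, 0 ≤ D n a)
    (hDmono : ∀ (n : ℕ) (a : Fin n → ι) (hn : 0 < n), D n a ≤ D 1 (fun _ => a ⟨0, hn⟩))
    (hsum : Summable fun i : ι => (μ (Z i)).toReal * (D 1 (fun _ => i)) ^ ε) :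
    ∀ n : ℕ, 1 ≤ n →
      (∑' a : Fin n → ι,
        (μ (⋂ i : Fin n, F^[(i : ℕ)] ⁻¹' Z (a i))).toReal *
          ∑ j : Fin n,
            (D (n - (j : ℕ))
              (fun k : Fin (n - (j : ℕ)) =>
                a ⟨(j : ℕ) + (k : ℕ), by have hk := k.isLt; have hj := j.isLt; omega⟩)) ^ ε
              * θ ^ (n - (j : ℕ)))
      ≤ (1 - θ)⁻¹ * ∑' i : ι, (μ (Z i)).toReal * (D 1 (fun _ => i)) ^ ε := by
  intro n _
  set w : ι → ℝ := fun i => D 1 (fun _ => i) ^ ε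
  have hw : ∀ i, 0 ≤ w i := fun i => Real.rpow_nonneg (hD0 _ _) ε
  set T := ∑' i, (μ (Z i)).toReal * w i
  have hT : 0 ≤ T := tsum_nonneg fun i => mul_nonneg ENNReal.toReal_nonneg (hw i)
  refine tsum_le_of_sum_le' (mul_nonneg (inv_nonneg.2 (by linarith)) hT) fun s => ?_
  calc _ ≤ ∑ a ∈ s, ∑ j : Fin n,
        (μ (itineraryCylinder F Z a)).toReal * (w (a j) * θ ^ (n - (j : ℕ))) := by
        refine sum_le_sum fun a _ => ?_
        rw [mul_sum]
        refine sum_le_sum fun j _ => ?_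
        refine mul_le_mul_of_nonneg_left (mul_le_mul_of_nonneg_right ?_ (by positivity))
          ENNReal.toReal_nonneg
        -- the first letter of the shifted word, `a ⟨j + 0, _⟩`, is `a j` definitionally
        exact Real.rpow_le_rpow (hD0 _ _) (hDmono _ _ (Nat.sub_pos_of_lt j.isLt)) hε0.le
    _ = ∑ j : Fin n,
        θ ^ (n - (j : ℕ)) * ∑ a ∈ s, (μ (itineraryCylinder F Z a)).toReal * w (a j) := by
        rw [sum_comm]
        refine sum_congr rfl fun j _ => ?_
        rw [mul_sum]
        exact sum_congr rfl fun a _ => by ring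
    _ ≤ ∑ j : Fin n, θ ^ (n - (j : ℕ)) * T := by
        gcongr with j
        exact sum_measure_itineraryCylinder_mul_le_tsum hF hZmeas hZdisj hw hsum s j
    _ = (∑ j : Fin n, θ ^ (n - (j : ℕ))) * T := (sum_mul ..).symm
    _ ≤ (1 - θ)⁻¹ * T := by
        gcongr
        exact sum_fin_pow_sub_le_inv_one_sub hθ0.le hθ1 n
end
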